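/- (Proposition 1) For every fixed t ∈ [0,T], if V(t,y) = G(t,y) for some y > 0, then V(t,y') = G(t,y') for every y' ≥ y; that is, if stopping is optimal at price y at time t, then stopping is optimal at any higher price y' at time t (the section of the stopping set D = {(t,y) : V(t,y) = G(t,y)} at each time t is an upper set in y). -/

import Mathlib

/-!
Write `Z = exp ((μ - σ²/2)(T - t) + σ (B_T - B_t))`, a positive random variable with mean
`exp (μ (T - t))`. The reward `M P τ + M y Z (T - τ)` is affine in the price `y`, and raising the
price from `y` to `y'` adds `M (y' - y) Z (T - τ)`, whose expectation is at most
`M (y' - y) (T - t) E[Z] = G(t, y') - G(t, y)`, with equality for `τ = t`.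
Hence `V(t, y') ≤ V(t, y) + G(t, y') - G(t, y) = G(t, y')` once `V(t, y) = G(t, y)`,
and `V(t, y') ≥ G(t, y')` always.
-/

open MeasureTheory ProbabilityTheory

/-- A standard Brownian motion with respect to the filtration `ℱ` under the probability
measure `Pr`: it starts at `0` a.s., has a.s. continuous paths, is adapted, and for
`0 ≤ u ≤ s` the increment `B s - B u` is independent of `ℱ u` and Gaussian with mean `0`
and variance `s - u`. -/
structure IsStandardBM {Ω : Type*} {mΩ : MeasurableSpace Ω}
    (Pr : Measure Ω) (ℱ : Filtration ℝ mΩ) (B : ℝ → Ω → ℝ) : Prop where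
  zero : ∀ᵐ ω ∂Pr, B 0 ω = 0
  cont : ∀ᵐ ω ∂Pr, Continuous fun s => B s ω
  adapted : Adapted ℱ B
  indep : ∀ u s : ℝ, 0 ≤ u → u ≤ s →
    Indep (MeasurableSpace.comap (fun ω => B s ω - B u ω) Real.measurableSpace) (ℱ u) Pr
  gauss : ∀ u s : ℝ, 0 ≤ u → u ≤ s →
    Pr.map (fun ω => B s ω - B u ω) = gaussianReal 0 (Real.toNNReal (s - u))

/-- `G t y`: the expected reward from stopping immediately at time `t` when the price is `y`. -/
noncomputable def G (M P μ T t y : ℝ) : ℝ :=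
  M * P * t + M * y * Real.exp (μ * (T - t)) * (T - t)

/-- `V t y`: the value function, the supremum of expected rewards `E[R^{t,y}(τ)]` over all
stopping times `τ` of the filtration `ℱ` with `t ≤ τ ≤ T` almost surely, where
`R^{t,y}(τ) = M·P·τ + M·Y_T^{t,y}·(T − τ)` and
`Y_T^{t,y} = y·exp((μ − σ²/2)(T − t) + σ(B_T − B_t))`. -/
noncomputable def V {Ω : Type*} {mΩ : MeasurableSpace Ω}
    (Pr : Measure Ω) (ℱ : Filtration ℝ mΩ) (B : ℝ → Ω → ℝ)
    (M P σ μ T t y : ℝ) : ℝ :=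
  sSup {x : ℝ | ∃ τ : Ω → ℝ, IsStoppingTime ℱ (fun ω => (τ ω : WithTop ℝ)) ∧
    (∀ᵐ ω ∂Pr, t ≤ τ ω ∧ τ ω ≤ T) ∧
    x = ∫ ω, (M * P * τ ω +
      M * (y * Real.exp ((μ - σ ^ 2 / 2) * (T - t) + σ * (B T ω - B t ω))) * (T - τ ω)) ∂Pr}

section Reward

variable {Ω : Type*} {mΩ : MeasurableSpace Ω}

/-- `y * Z` stands for the terminal price `Y_T^{t,y}`. -/
def reward (M P T y : ℝ) (Z τ : Ω → ℝ) (ω : Ω) : ℝ :=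
  M * P * τ ω + M * (y * Z ω) * (T - τ ω)

def rewardSet (Pr : Measure Ω) (ℱ : Filtration ℝ mΩ) (M P T t y : ℝ) (Z : Ω → ℝ) : Set ℝ :=
  {x : ℝ | ∃ τ : Ω → ℝ, IsStoppingTime ℱ (fun ω => (τ ω : WithTop ℝ)) ∧
    (∀ᵐ ω ∂Pr, t ≤ τ ω ∧ τ ω ≤ T) ∧ x = ∫ ω, reward M P T y Z τ ω ∂Pr}

variable {Pr : Measure Ω} {ℱ : Filtration ℝ mΩ} {M P T t y y' : ℝ} {Z τ : Ω → ℝ} {ω : Ω}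

lemma reward_le_of_mem_Icc (hZ : 0 ≤ Z ω) (hτ : τ ω ∈ Set.Icc t T) :
    reward M P T y Z τ ω ≤ |M * P| * max |t| |T| + |M * y| * (T - t) * Z ω := by
  have hP : M * P * τ ω ≤ |M * P| * max |t| |T| :=
    calc M * P * τ ω ≤ |M * P| * |τ ω| := (le_abs_self _).trans (abs_mul _ _).le
      _ ≤ |M * P| * max |t| |T| := by gcongr; exact abs_le_max_abs_abs hτ.1 hτ.2
  have hy : M * y * (T - τ ω) ≤ |M * y| * (T - t) :=
    calc M * y * (T - τ ω) ≤ |M * y| * (T - τ ω) :=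
          mul_le_mul_of_nonneg_right (le_abs_self _) (by linarith [hτ.2])
      _ ≤ |M * y| * (T - t) := by gcongr; exact hτ.1
  calc reward M P T y Z τ ω = M * P * τ ω + M * y * (T - τ ω) * Z ω := by
        unfold reward; ring
    _ ≤ |M * P| * max |t| |T| + |M * y| * (T - t) * Z ω := by gcongr

lemma reward_le_add_of_le (hM : 0 ≤ M) (hyy' : y ≤ y') (hZ : 0 ≤ Z ω)
    (hτ : t ≤ τ ω ∧ τ ω ≤ T) :
    reward M P T y' Z τ ω ≤ reward M P T y Z τ ω + M * (y' - y) * (T - t) * Z ω := by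
  have hgain : M * (y' - y) * Z ω * (T - τ ω) ≤ M * (y' - y) * Z ω * (T - t) :=
    mul_le_mul_of_nonneg_left (by linarith [hτ.1]) (by have := sub_nonneg.2 hyy'; positivity)
  unfold reward
  linarith

lemma integrable_reward [IsFiniteMeasure Pr] (hZ : Integrable Z Pr)
    (hτm : AEStronglyMeasurable τ Pr) (hτ : ∀ᵐ ω ∂Pr, t ≤ τ ω ∧ τ ω ≤ T) :
    Integrable (reward M P T y Z τ) Pr := by
  have hτ_bdd : ∀ᵐ ω ∂Pr, ‖T - τ ω‖ ≤ T - t := by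
    filter_upwards [hτ] with ω hω
    rw [Real.norm_eq_abs, abs_le]
    constructor <;> linarith [hω.1, hω.2]
  have hτ_int : Integrable τ Pr := by
    refine (integrable_const (max |t| |T|)).mono' hτm ?_
    filter_upwards [hτ] with ω hω
    exact abs_le_max_abs_abs hω.1 hω.2
  have hZτ : Integrable (fun ω => (T - τ ω) * Z ω) Pr :=
    hZ.bdd_mul (aestronglyMeasurable_const.sub hτm) hτ_bdd
  refine (hτ_int.const_mul (M * P)).add ((hZτ.const_mul (M * y)).congr ?_)
  exact ae_of_all _ fun ω => by ring

lemma integral_reward_const [IsProbabilityMeasure Pr] (hZ : Integrable Z Pr) :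
    ∫ ω, reward M P T y Z (fun _ => t) ω ∂Pr = M * P * t + M * y * (∫ ω, Z ω ∂Pr) * (T - t) := by
  have hrw : reward M P T y Z (fun _ => t) = fun ω => M * P * t + M * y * (T - t) * Z ω := by
    funext ω; unfold reward; ring
  rw [hrw, integral_add (integrable_const _) (hZ.const_mul _), integral_const,
    integral_const_mul, probReal_univ, one_smul]
  ring

lemma MeasureTheory.IsStoppingTime.aestronglyMeasurable_real
    (hτ : IsStoppingTime ℱ (fun ω => (τ ω : WithTop ℝ))) : AEStronglyMeasurable τ Pr :=
  (hτ.measurable'.untopD 0).aestronglyMeasurable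

lemma integral_reward_le_of_ae_le [IsProbabilityMeasure Pr] (hZ : Integrable Z Pr)
    (hτm : AEStronglyMeasurable τ Pr) (hτ : ∀ᵐ ω ∂Pr, t ≤ τ ω ∧ τ ω ≤ T) {a b : ℝ}
    (hle : ∀ᵐ ω ∂Pr, reward M P T y Z τ ω ≤ a + b * Z ω) :
    ∫ ω, reward M P T y Z τ ω ∂Pr ≤ a + b * ∫ ω, Z ω ∂Pr := by
  calc ∫ ω, reward M P T y Z τ ω ∂Pr ≤ ∫ ω, (a + b * Z ω) ∂Pr :=
        integral_mono_ae (integrable_reward hZ hτm hτ)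
          ((integrable_const a).add (hZ.const_mul b)) hle
    _ = a + b * ∫ ω, Z ω ∂Pr := by
        rw [integral_add (integrable_const a) (hZ.const_mul b), integral_const,
          integral_const_mul, probReal_univ, one_smul]

lemma bddAbove_rewardSet [IsProbabilityMeasure Pr] (hZ : Integrable Z Pr) (hZ₀ : 0 ≤ᵐ[Pr] Z) :
    BddAbove (rewardSet Pr ℱ M P T t y Z) := by
  refine ⟨|M * P| * max |t| |T| + |M * y| * (T - t) * ∫ ω, Z ω ∂Pr, ?_⟩
  rintro x ⟨τ, hτ, hτ_mem, rfl⟩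
  have hτm := hτ.aestronglyMeasurable_real (Pr := Pr)
  refine integral_reward_le_of_ae_le hZ hτm hτ_mem ?_
  filter_upwards [hZ₀, hτ_mem] with ω hω hτω
  exact reward_le_of_mem_Icc hω hτω

theorem sSup_rewardSet_eq_of_le_of_sSup_rewardSet_eq [IsProbabilityMeasure Pr]
    (hZ : Integrable Z Pr) (hZ₀ : 0 ≤ᵐ[Pr] Z) (hM : 0 ≤ M) (htT : t ≤ T) (hyy' : y ≤ y')
    (hstop : sSup (rewardSet Pr ℱ M P T t y Z) = M * P * t + M * y * (∫ ω, Z ω ∂Pr) * (T - t)) :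
    sSup (rewardSet Pr ℱ M P T t y' Z) = M * P * t + M * y' * (∫ ω, Z ω ∂Pr) * (T - t) := by
  have hmem : M * P * t + M * y' * (∫ ω, Z ω ∂Pr) * (T - t) ∈ rewardSet Pr ℱ M P T t y' Z :=
    ⟨fun _ => t, isStoppingTime_const ℱ t, ae_of_all _ fun _ => ⟨le_rfl, htT⟩,
      (integral_reward_const hZ).symm⟩
  have hbound : ∀ x ∈ rewardSet Pr ℱ M P T t y' Z,
      x ≤ M * P * t + M * y' * (∫ ω, Z ω ∂Pr) * (T - t) := by
    rintro x ⟨τ, hτ, hτ_mem, rfl⟩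
    have hτm := hτ.aestronglyMeasurable_real (Pr := Pr)
    have hy : ∫ ω, reward M P T y Z τ ω ∂Pr ≤ M * P * t + M * y * (∫ ω, Z ω ∂Pr) * (T - t) :=
      hstop ▸ le_csSup (bddAbove_rewardSet hZ hZ₀) ⟨τ, hτ, hτ_mem, rfl⟩
    have hy' : ∫ ω, reward M P T y' Z τ ω ∂Pr ≤
        ∫ ω, reward M P T y Z τ ω ∂Pr + M * (y' - y) * (T - t) * ∫ ω, Z ω ∂Pr := by
      rw [← integral_const_mul, ← integral_add (integrable_reward hZ hτm hτ_mem)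
        (hZ.const_mul _)]
      refine integral_mono_ae (integrable_reward hZ hτm hτ_mem)
        ((integrable_reward hZ hτm hτ_mem).add (hZ.const_mul _)) ?_
      filter_upwards [hZ₀, hτ_mem] with ω hω hτω
      exact reward_le_add_of_le hM hyy' hω hτω
    linarith
  exact le_antisymm (csSup_le ⟨_, hmem⟩ hbound) (le_csSup ⟨_, hbound⟩ hmem)

end Reward

section Gaussian

variable {Ω : Type*} {mΩ : MeasurableSpace Ω} {Pr : Measure Ω}
  {X : Ω → ℝ} {m : ℝ} {v : NNReal}

lemma integrable_exp_add_mul_of_map_eq_gaussianReal [NeZero Pr] (hX : Pr.map X = gaussianReal m v)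
    (a c : ℝ) : Integrable (fun ω => Real.exp (a + c * X ω)) Pr := by
  have hint : Integrable (fun ω => Real.exp (c * X ω)) Pr :=
    mgf_pos_iff.1 ((mgf_gaussianReal hX c).symm ▸ Real.exp_pos _)
  simpa only [Real.exp_add] using hint.const_mul (Real.exp a)

lemma integral_exp_add_mul_of_map_eq_gaussianReal (hX : Pr.map X = gaussianReal m v)
    (a c : ℝ) : ∫ ω, Real.exp (a + c * X ω) ∂Pr = Real.exp (a + m * c + v * c ^ 2 / 2) := by
  simp_rw [Real.exp_add a]
  rw [integral_const_mul, ← mgf, mgf_gaussianReal hX, ← Real.exp_add, add_assoc]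

end Gaussian

theorem stmt_5 {Ω : Type*} {mΩ : MeasurableSpace Ω}
    (Pr : Measure Ω) [IsProbabilityMeasure Pr] (ℱ : Filtration ℝ mΩ) (B : ℝ → Ω → ℝ)
    (hB : IsStandardBM Pr ℱ B)
    (T M P σ μ : ℝ) (hM : 0 < M)
    (t : ℝ) (ht : t ∈ Set.Icc 0 T) (y y' : ℝ) (hyy' : y ≤ y')
    (hstop : V Pr ℱ B M P σ μ T t y = G M P μ T t y) :
    V Pr ℱ B M P σ μ T t y' = G M P μ T t y' := by
  have hinc := hB.gauss t T ht.1 ht.2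
  set Z : Ω → ℝ := fun ω => Real.exp ((μ - σ ^ 2 / 2) * (T - t) + σ * (B T ω - B t ω))
  have hZ : Integrable Z Pr := integrable_exp_add_mul_of_map_eq_gaussianReal hinc _ _
  have hEZ : ∫ ω, Z ω ∂Pr = Real.exp (μ * (T - t)) := by
    rw [integral_exp_add_mul_of_map_eq_gaussianReal hinc, Real.coe_toNNReal _ (sub_nonneg.2 ht.2)]
    ring_nf
  have hG : ∀ z, G M P μ T t z = M * P * t + M * z * (∫ ω, Z ω ∂Pr) * (T - t) := fun z => by
    rw [hEZ, G]
  have hV : ∀ z, V Pr ℱ B M P σ μ T t z = sSup (rewardSet Pr ℱ M P T t z Z) := fun _ => rfl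
  rw [hV, hG] at hstop ⊢
  have hZ₀ : 0 ≤ᵐ[Pr] Z := ae_of_all _ fun ω => (Real.exp_pos _).le
  exact sSup_rewardSet_eq_of_le_of_sSup_rewardSet_eq hZ hZ₀ hM.le ht.2 hyy'
    hstop
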